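/- Let (E, F) be an antimatroid with rank closure operator σ, let N = {E \ X : X ∈ F} be the complementary convex geometry, and let τ : 2^E → 2^E be the closure operator τ(X) = ∩{A ∈ N : X ⊆ A}. Then for every X ⊆ E: E \ σ(X) = ex_τ(E \ X), where ex_τ(Y) = {y ∈ Y : y ∉ τ(Y \ {y})} is the set of extreme points of Y with respect to τ. -/

import Mathlib

/-- A greedoid on `E`: `∅` is feasible and larger feasible sets augment smaller ones. -/
def IsGreedoid {E : Type*} (F : Set (Set E)) : Prop :=
  ∅ ∈ F ∧ ∀ X ∈ F, ∀ Y ∈ F, Y.ncard < X.ncard → ∃ x ∈ X \ Y, insert x Y ∈ F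

/-- The rank function of a set system: `r X = max {|A| : A ⊆ X, A ∈ F}`. -/
noncomputable def greedoidRank {E : Type*} (F : Set (Set E)) (X : Set E) : ℕ :=
  sSup {n | ∃ A ∈ F, A ⊆ X ∧ A.ncard = n}

/-- The rank closure operator `σ X = {x : r (X ∪ {x}) = r X}`. -/
noncomputable def rankClosure {E : Type*} (F : Set (Set E)) (X : Set E) : Set E :=
  {x | greedoidRank F (insert x X) = greedoidRank F X}

/-- The set of extreme points of `Y` with respect to an operator `α`. -/
def extremePoints {E : Type*} (α : Set E → Set E) (Y : Set E) : Set E :=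
  {y ∈ Y | y ∉ α (Y \ {y})}

/-!
An element `x ∉ X` raises the rank of `X` exactly when some feasible set `B` with `x ∈ B`
lies inside `insert x X`: such a `B` united with a basis of `X` is feasible (union-closure) and
strictly larger, while conversely a basis of `insert x X` must contain `x`. Complementing `B`
gives a convex set containing `Xᶜ \ {x}` but not `x`, which says that `x` is an extreme point
of `Xᶜ`.
-/

namespace greedoidRank

variable {E : Type*} {F : Set (Set E)} {X Y A : Set E}

theorem bddAbove [Finite E] (F : Set (Set E)) (X : Set E) :
    BddAbove {n | ∃ A ∈ F, A ⊆ X ∧ A.ncard = n} :=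
  ⟨Nat.card E, by
    rintro n ⟨A, -, -, rfl⟩
    exact Set.ncard_le_card A⟩

theorem ncard_le [Finite E] (hA : A ∈ F) (hAX : A ⊆ X) : A.ncard ≤ greedoidRank F X :=
  le_csSup (bddAbove F X) ⟨A, hA, hAX, rfl⟩

theorem exists_feasible_ncard_eq [Finite E] (hF : ∅ ∈ F) (X : Set E) :
    ∃ A ∈ F, A ⊆ X ∧ A.ncard = greedoidRank F X :=
  Nat.sSup_mem (s := {n | ∃ A ∈ F, A ⊆ X ∧ A.ncard = n})
    ⟨0, ∅, hF, Set.empty_subset X, Set.ncard_empty E⟩ (bddAbove F X)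

theorem mono [Finite E] (hXY : X ⊆ Y) : greedoidRank F X ≤ greedoidRank F Y :=
  csSup_le_csSup' (bddAbove F Y) fun _ ⟨A, hA, hAX, hn⟩ => ⟨A, hA, hAX.trans hXY, hn⟩

end greedoidRank

section Antimatroid

variable {E : Type*} [Finite E] {F : Set (Set E)} {X : Set E} {x : E}

theorem notMem_rankClosure_iff (hF : ∅ ∈ F) (hUnion : ∀ A ∈ F, ∀ B ∈ F, A ∪ B ∈ F) :
    x ∉ rankClosure F X ↔ x ∉ X ∧ ∃ B ∈ F, x ∈ B ∧ B ⊆ insert x X := by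
  constructor
  · intro hx
    have hxX : x ∉ X := fun h => hx (by simp [rankClosure, Set.insert_eq_of_mem h])
    have hlt : greedoidRank F X < greedoidRank F (insert x X) :=
      (greedoidRank.mono (Set.subset_insert x X)).lt_of_ne' hx
    obtain ⟨B, hB, hBX, hBr⟩ := greedoidRank.exists_feasible_ncard_eq hF (insert x X)
    refine ⟨hxX, B, hB, ?_, hBX⟩
    by_contra hxB
    have hBX' : B ⊆ X := (Set.subset_insert_iff_of_notMem hxB).mp hBX
    exact (greedoidRank.ncard_le hB hBX').not_gt (hBr ▸ hlt)
  · rintro ⟨hxX, B, hB, hxB, hBX⟩ hx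
    obtain ⟨C, hC, hCX, hCr⟩ := greedoidRank.exists_feasible_ncard_eq hF X
    have hxC : x ∉ C := fun h => hxX (hCX h)
    have hCB : insert x C ⊆ C ∪ B := Set.insert_subset (Or.inr hxB) Set.subset_union_left
    have hrank : greedoidRank F X + 1 ≤ greedoidRank F (insert x X) :=
      calc greedoidRank F X + 1 = (insert x C).ncard := by
            rw [Set.ncard_insert_of_notMem hxC, hCr]
        _ ≤ (C ∪ B).ncard := Set.ncard_le_ncard hCB
        _ ≤ greedoidRank F (insert x X) :=
            greedoidRank.ncard_le (hUnion C hC B hB)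
              (Set.union_subset (hCX.trans (Set.subset_insert x X)) hBX)
    simp only [rankClosure, Set.mem_ofPred_eq] at hx
    omega

end Antimatroid

theorem mem_extremePoints_compl_iff_exists_feasible {E : Type*} {F : Set (Set E)} {X : Set E}
    {x : E} :
    x ∈ extremePoints (fun Y => ⋂₀ {A | A ∈ {A : Set E | Aᶜ ∈ F} ∧ Y ⊆ A}) Xᶜ ↔
      x ∉ X ∧ ∃ B ∈ F, x ∈ B ∧ B ⊆ insert x X := by
  simp only [extremePoints, Set.mem_ofPred_eq, Set.mem_sInter, not_forall, exists_prop]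
  refine and_congr Iff.rfl ⟨fun ⟨A, ⟨hA, hXA⟩, hxA⟩ => ⟨Aᶜ, hA, hxA, ?_⟩,
    fun ⟨B, hB, hxB, hBX⟩ => ⟨Bᶜ, ⟨by rwa [compl_compl], ?_⟩, not_not.mpr hxB⟩⟩
  · intro y hyA
    by_contra hy
    exact hyA (hXA ⟨fun h => hy (Or.inr h), fun h => hy (Or.inl h)⟩)
  · intro y ⟨hyX, hyx⟩ hyB
    exact (hBX hyB).elim hyx hyX

theorem stmt19 {E : Type*} [Fintype E] (F : Set (Set E)) (hF : IsGreedoid F)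
    (hUnion : ∀ A ∈ F, ∀ B ∈ F, A ∪ B ∈ F)
    (N : Set (Set E)) (hN : N = {A : Set E | Aᶜ ∈ F})
    (τ : Set E → Set E) (hτ : ∀ X : Set E, τ X = ⋂₀ {A | A ∈ N ∧ X ⊆ A})
    (X : Set E) :
    (rankClosure F X)ᶜ = extremePoints τ Xᶜ := by
  obtain rfl : τ = fun Y => ⋂₀ {A | A ∈ N ∧ Y ⊆ A} := funext hτ
  subst hN
  ext x
  rw [Set.mem_compl_iff, notMem_rankClosure_iff hF.1 hUnion,
    mem_extremePoints_compl_iff_exists_feasible]
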